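/- Let E and F be orthogonal complementary subspaces of ℝᵈ and let φ : ℝᵈ → ℝᵈ be a C¹ map of the form φ(u,v) = (u, θ(u,v)) for (u,v) ∈ E × F. Let A_E : E → E and A_F : F → F be invertible linear maps with ‖A_F‖·‖A_E⁻¹‖ ≤ 1 and A_F conformal (A_F = α·I with I an isometry). Then the conjugate φ̄ = A^ℓ ∘ φ⁻¹ ∘ A^{−ℓ}, where A = (A_E, A_F), satisfies ‖Dφ̄ − Id‖₀ ≤ ‖Dφ⁻¹ − Id‖₀, for every ℓ ≥ 0. -/

import Mathlib

/-!
Since `φ⁻¹` preserves the `E`-coordinate, `N = Dφ⁻¹ - Id` has vanishing `E`-row, so in the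
conjugate `A N A⁻¹` only `A_F` acts on the left. Hence `‖A N A⁻¹ x‖ ≤ ‖N‖ · ‖A_F‖ ‖A⁻¹ x‖`, and
`‖A_F‖ ‖A⁻¹ x‖ ≤ ‖x‖` holds componentwise: on `E` by `‖A_F‖ ‖A_E⁻¹‖ ≤ 1`, on `F` because
`A_F` is conformal. Conjugation by `A` keeps the skew form, so the bound iterates `ℓ` times.
-/

variable {𝕜 : Type*} [NontriviallyNormedField 𝕜]
  {E F E' F' : Type*} [NormedAddCommGroup E] [NormedSpace 𝕜 E] [NormedAddCommGroup F]
  [NormedSpace 𝕜 F] [NormedAddCommGroup E'] [NormedSpace 𝕜 E'] [NormedAddCommGroup F']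
  [NormedSpace 𝕜 F']

namespace WithLp

theorem prod_norm_eq_norm_snd_of_L2 {x : WithLp 2 (E × F)} (hx : x.fst = 0) : ‖x‖ = ‖x.snd‖ := by
  rw [prod_norm_eq_of_L2, hx, norm_zero, zero_pow two_ne_zero, zero_add,
    Real.sqrt_sq (norm_nonneg _)]

theorem mul_prod_norm_le_of_L2 {c : ℝ} (hc : 0 ≤ c) {x : WithLp 2 (E' × F')}
    {y : WithLp 2 (E × F)}
    (h₁ : c * ‖y.fst‖ ≤ ‖x.fst‖) (h₂ : c * ‖y.snd‖ ≤ ‖x.snd‖) : c * ‖y‖ ≤ ‖x‖ := by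
  have h₁' := pow_le_pow_left₀ (by positivity) h₁ 2
  have h₂' := pow_le_pow_left₀ (by positivity) h₂ 2
  refine (pow_le_pow_iff_left₀ (by positivity) (norm_nonneg x) two_ne_zero).mp ?_
  rw [mul_pow] at h₁' h₂' ⊢
  rw [prod_norm_sq_eq_of_L2, prod_norm_sq_eq_of_L2]
  linarith

end WithLp

namespace ContinuousLinearEquiv

def withLpProdCongr (f : E ≃L[𝕜] E') (g : F ≃L[𝕜] F') :
    WithLp 2 (E × F) ≃L[𝕜] WithLp 2 (E' × F') :=
  (WithLp.prodContinuousLinearEquiv 2 𝕜 E F).trans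
    ((f.prodCongr g).trans (WithLp.prodContinuousLinearEquiv 2 𝕜 E' F').symm)

@[simp]
theorem withLpProdCongr_apply (f : E ≃L[𝕜] E') (g : F ≃L[𝕜] F') (x : WithLp 2 (E × F)) :
    f.withLpProdCongr g x = WithLp.toLp 2 (f x.fst, g x.snd) := rfl

@[simp]
theorem withLpProdCongr_symm_apply (f : E ≃L[𝕜] E') (g : F ≃L[𝕜] F') (x : WithLp 2 (E' × F')) :
    (f.withLpProdCongr g).symm x = WithLp.toLp 2 (f.symm x.fst, g.symm x.snd) := rfl

theorem opNorm_mul_norm_symm_apply_le (g : F ≃L[𝕜] F') {α : ℝ} (hα : 0 ≤ α)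
    (hg : ∀ v, ‖g v‖ = α * ‖v‖) (w : F') : ‖(g : F →L[𝕜] F')‖ * ‖g.symm w‖ ≤ ‖w‖ := by
  have hgα : ‖(g : F →L[𝕜] F')‖ ≤ α :=
    ContinuousLinearMap.opNorm_le_bound _ hα fun v => (hg v).le
  calc ‖(g : F →L[𝕜] F')‖ * ‖g.symm w‖ ≤ α * ‖g.symm w‖ := by gcongr
    _ = ‖w‖ := by rw [← hg, apply_symm_apply]

end ContinuousLinearEquiv

section Conjugation

variable (T : E ≃L[𝕜] E') (S : F ≃L[𝕜] F') {α : ℝ} (hα : 0 ≤ α) (hS : ∀ v, ‖S v‖ = α * ‖v‖)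
  (hTS : ‖(S : F →L[𝕜] F')‖ * ‖(T.symm : E' →L[𝕜] E)‖ ≤ 1)
include hα hS hTS

theorem ContinuousLinearEquiv.opNorm_mul_norm_withLpProdCongr_symm_apply_le
    (x : WithLp 2 (E' × F')) :
    ‖(S : F →L[𝕜] F')‖ * ‖(T.withLpProdCongr S).symm x‖ ≤ ‖x‖ := by
  refine WithLp.mul_prod_norm_le_of_L2 (y := (T.withLpProdCongr S).symm x) (norm_nonneg _) ?_
    (S.opNorm_mul_norm_symm_apply_le hα hS x.snd)
  calc ‖(S : F →L[𝕜] F')‖ * ‖T.symm x.fst‖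
      ≤ ‖(S : F →L[𝕜] F')‖ * (‖(T.symm : E' →L[𝕜] E)‖ * ‖x.fst‖) := by
        gcongr; exact (T.symm : E' →L[𝕜] E).le_opNorm _
    _ = ‖(S : F →L[𝕜] F')‖ * ‖(T.symm : E' →L[𝕜] E)‖ * ‖x.fst‖ := (mul_assoc ..).symm
    _ ≤ ‖x.fst‖ := mul_le_of_le_one_left (norm_nonneg _) hTS

theorem ContinuousLinearEquiv.norm_withLpProdCongr_conj_le
    (N : WithLp 2 (E × F) →L[𝕜] WithLp 2 (E × F)) (hN : ∀ x, (N x).fst = 0) :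
    ‖(T.withLpProdCongr S : WithLp 2 (E × F) →L[𝕜] WithLp 2 (E' × F')) ∘L N ∘L
      ((T.withLpProdCongr S).symm : WithLp 2 (E' × F') →L[𝕜] WithLp 2 (E × F))‖ ≤ ‖N‖ := by
  refine ContinuousLinearMap.opNorm_le_bound _ (norm_nonneg N) fun x => ?_
  set y := (T.withLpProdCongr S).symm x
  have hNy : ‖N y‖ = ‖(N y).snd‖ := WithLp.prod_norm_eq_norm_snd_of_L2 (hN y)
  calc ‖T.withLpProdCongr S (N y)‖ = ‖S (N y).snd‖ :=
        WithLp.prod_norm_eq_norm_snd_of_L2 (by simp [hN y])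
    _ ≤ ‖(S : F →L[𝕜] F')‖ * ‖N y‖ := hNy ▸ (S : F →L[𝕜] F').le_opNorm _
    _ ≤ ‖(S : F →L[𝕜] F')‖ * (‖N‖ * ‖y‖) := by gcongr; exact N.le_opNorm y
    _ = ‖N‖ * (‖(S : F →L[𝕜] F')‖ * ‖y‖) := by ring
    _ ≤ ‖N‖ * ‖x‖ := by
        gcongr; exact T.opNorm_mul_norm_withLpProdCongr_symm_apply_le S hα hS hTS x

end Conjugation

theorem ContinuousLinearMap.comp_fderiv_of_comp_eq {G H : Type*} [NormedAddCommGroup G]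
    [NormedSpace 𝕜 G] [NormedAddCommGroup H] [NormedSpace 𝕜 H] (f : G →L[𝕜] H) {g : G → G}
    {y : G} (hg : DifferentiableAt 𝕜 g y) (hfg : f ∘ g = f) : f ∘L fderiv 𝕜 g y = f := by
  have h := f.hasFDerivAt.comp y hg.hasFDerivAt
  rw [hfg] at h
  exact h.unique f.hasFDerivAt

theorem ContinuousLinearEquiv.fderiv_conj_sub_id {G H : Type*} [NormedAddCommGroup G]
    [NormedSpace 𝕜 G] [NormedAddCommGroup H] [NormedSpace 𝕜 H] (L : G ≃L[𝕜] H) (g : G → G)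
    (y : H) :
    fderiv 𝕜 (L ∘ g ∘ L.symm) y - ContinuousLinearMap.id 𝕜 H =
      (L : G →L[𝕜] H) ∘L (fderiv 𝕜 g (L.symm y) - ContinuousLinearMap.id 𝕜 G) ∘L
        (L.symm : H →L[𝕜] G) := by
  rw [L.comp_fderiv, L.symm.comp_right_fderiv]
  ext x
  simp

section Skew

variable (T : E ≃L[𝕜] E) (S : F ≃L[𝕜] F) {α : ℝ} (hα : 0 ≤ α) (hS : ∀ v, ‖S v‖ = α * ‖v‖)
  (hTS : ‖(S : F →L[𝕜] F)‖ * ‖(T.symm : E →L[𝕜] E)‖ ≤ 1)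
  {g : WithLp 2 (E × F) → WithLp 2 (E × F)} (hg : Differentiable 𝕜 g)
  (hgfst : ∀ x, (g x).fst = x.fst) {C : ℝ}
  (hC : ∀ y, ‖fderiv 𝕜 g y - ContinuousLinearMap.id 𝕜 _‖ ≤ C)
include hα hS hTS hg hgfst hC

theorem ContinuousLinearEquiv.norm_fderiv_withLpProdCongr_conj_sub_id_le
    (y : WithLp 2 (E × F)) :
    ‖fderiv 𝕜 (T.withLpProdCongr S ∘ g ∘ (T.withLpProdCongr S).symm) y -
      ContinuousLinearMap.id 𝕜 _‖ ≤ C := by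
  rw [fderiv_conj_sub_id]
  refine (T.norm_withLpProdCongr_conj_le S hα hS hTS _ fun x => ?_).trans (hC _)
  have h := congr($((WithLp.fstL 2 𝕜 E F).comp_fderiv_of_comp_eq
    (hg ((T.withLpProdCongr S).symm y)) (funext hgfst)) x)
  simpa [sub_eq_zero] using h

theorem ContinuousLinearEquiv.norm_fderiv_iterate_withLpProdCongr_conj_sub_id_le (n : ℕ)
    (y : WithLp 2 (E × F)) :
    ‖fderiv 𝕜 ((T.withLpProdCongr S)^[n] ∘ g ∘ (T.withLpProdCongr S).symm^[n]) y -
      ContinuousLinearMap.id 𝕜 _‖ ≤ C := by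
  induction n generalizing g with
  | zero => simpa using hC y
  | succ n ih =>
    set L := T.withLpProdCongr S
    have hconj : L^[n + 1] ∘ g ∘ L.symm^[n + 1] = L^[n] ∘ (L ∘ g ∘ L.symm) ∘ L.symm^[n] := by
      rw [Function.iterate_succ, Function.iterate_succ']
      rfl
    rw [hconj]
    exact ih (L.differentiable.comp (hg.comp L.symm.differentiable)) (fun x => by simp [L, hgfst])
      (T.norm_fderiv_withLpProdCongr_conj_sub_id_le S hα hS hTS hg hgfst hC)

end Skew

theorem stmt12_general (d₁ d₂ : ℕ)
    (A_E : EuclideanSpace ℝ (Fin d₁) ≃L[ℝ] EuclideanSpace ℝ (Fin d₁))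
    (A_F : EuclideanSpace ℝ (Fin d₂) ≃L[ℝ] EuclideanSpace ℝ (Fin d₂))
    (hnorm : ‖(A_F : EuclideanSpace ℝ (Fin d₂) →L[ℝ] EuclideanSpace ℝ (Fin d₂))‖ *
        ‖(A_E.symm : EuclideanSpace ℝ (Fin d₁) →L[ℝ] EuclideanSpace ℝ (Fin d₁))‖ ≤ 1)
    (α : ℝ) (hα : 0 < α) (hconf : ∀ v, ‖A_F v‖ = α * ‖v‖)
    (φ φinv : WithLp 2 (EuclideanSpace ℝ (Fin d₁) × EuclideanSpace ℝ (Fin d₂)) →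
        WithLp 2 (EuclideanSpace ℝ (Fin d₁) × EuclideanSpace ℝ (Fin d₂)))
    (hφinv : Differentiable ℝ φinv)
    (hskew : ∀ x, ((WithLp.equiv 2 _) (φ x)).1 = ((WithLp.equiv 2 _) x).1)
    (hri : Function.RightInverse φinv φ)
    (A Ainv : WithLp 2 (EuclideanSpace ℝ (Fin d₁) × EuclideanSpace ℝ (Fin d₂)) →
        WithLp 2 (EuclideanSpace ℝ (Fin d₁) × EuclideanSpace ℝ (Fin d₂)))
    (hA : ∀ x, A x = (WithLp.equiv 2 _).symm
        (A_E ((WithLp.equiv 2 _) x).1, A_F ((WithLp.equiv 2 _) x).2))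
    (hAinv : ∀ x, Ainv x = (WithLp.equiv 2 _).symm
        (A_E.symm ((WithLp.equiv 2 _) x).1, A_F.symm ((WithLp.equiv 2 _) x).2))
    (ℓ : ℕ) (C : ℝ)
    (hC : ∀ y, ‖fderiv ℝ φinv y - ContinuousLinearMap.id ℝ _‖ ≤ C) :
    ∀ x, ‖fderiv ℝ (A^[ℓ] ∘ φinv ∘ Ainv^[ℓ]) x - ContinuousLinearMap.id ℝ _‖ ≤ C := by
  have hA' : A = A_E.withLpProdCongr A_F := funext hA
  have hAinv' : Ainv = (A_E.withLpProdCongr A_F).symm := funext hAinv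
  have hφinv_fst (x) : (φinv x).fst = x.fst := by
    have h := hskew (φinv x)
    rw [hri x] at h
    exact h.symm
  rw [hA', hAinv']
  exact A_E.norm_fderiv_iterate_withLpProdCongr_conj_sub_id_le A_F hα.le hconf hnorm hφinv
    hφinv_fst hC ℓ

theorem stmt12 (d₁ d₂ : ℕ)
    (A_E : EuclideanSpace ℝ (Fin d₁) ≃L[ℝ] EuclideanSpace ℝ (Fin d₁))
    (A_F : EuclideanSpace ℝ (Fin d₂) ≃L[ℝ] EuclideanSpace ℝ (Fin d₂))
    (hnorm : ‖(A_F : EuclideanSpace ℝ (Fin d₂) →L[ℝ] EuclideanSpace ℝ (Fin d₂))‖ *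
        ‖(A_E.symm : EuclideanSpace ℝ (Fin d₁) →L[ℝ] EuclideanSpace ℝ (Fin d₁))‖ ≤ 1)
    (α : ℝ) (hα : 0 < α) (hconf : ∀ v, ‖A_F v‖ = α * ‖v‖)
    (φ φinv : WithLp 2 (EuclideanSpace ℝ (Fin d₁) × EuclideanSpace ℝ (Fin d₂)) →
        WithLp 2 (EuclideanSpace ℝ (Fin d₁) × EuclideanSpace ℝ (Fin d₂)))
    (hφ : Differentiable ℝ φ) (hφinv : Differentiable ℝ φinv)
    (hskew : ∀ x, ((WithLp.equiv 2 _) (φ x)).1 = ((WithLp.equiv 2 _) x).1)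
    (hli : Function.LeftInverse φinv φ) (hri : Function.RightInverse φinv φ)
    (A Ainv : WithLp 2 (EuclideanSpace ℝ (Fin d₁) × EuclideanSpace ℝ (Fin d₂)) →
        WithLp 2 (EuclideanSpace ℝ (Fin d₁) × EuclideanSpace ℝ (Fin d₂)))
    (hA : ∀ x, A x = (WithLp.equiv 2 _).symm
        (A_E ((WithLp.equiv 2 _) x).1, A_F ((WithLp.equiv 2 _) x).2))
    (hAinv : ∀ x, Ainv x = (WithLp.equiv 2 _).symm
        (A_E.symm ((WithLp.equiv 2 _) x).1, A_F.symm ((WithLp.equiv 2 _) x).2))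
    (ℓ : ℕ) (C : ℝ)
    (hC : ∀ y, ‖fderiv ℝ φinv y - ContinuousLinearMap.id ℝ _‖ ≤ C) :
    ∀ x, ‖fderiv ℝ (A^[ℓ] ∘ φinv ∘ Ainv^[ℓ]) x - ContinuousLinearMap.id ℝ _‖ ≤ C :=
  stmt12_general d₁ d₂ A_E A_F hnorm α hα hconf φ φinv hφinv hskew hri A Ainv hA hAinv ℓ C hC
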